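/- Fix complex numbers m ≠ 0 and k. For r ∈ ℂ with r ∉ {0, 1}, set η(r) = m/(1 − r), s(r) = 1 + (k/m)·(1 − r), let G(r) be the 3×3 matrix equal to the identity except for entry (1,2) = η(r), and let M(r) = (G(r) ⊗ G(r))⁻¹ * R(G_{r, s(r)}) * (G(r) ⊗ G(r)). Then M(r) tends (entrywise) to R(G_{m,k}) as r tends to 1 within {r ∈ ℂ | r ≠ 0, r ≠ 1, s(r) ≠ 0}. -/

import Mathlib

noncomputable section

open Matrix Filter Topology

/-- The `R`-matrix of the quantum group `G_{r,s}`, indexed by `Fin 3 × Fin 3`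
(indices `0,1,2` correspond to the paper's `1,2,3`). -/
def Rgrs (r s : ℂ) : Matrix (Fin 3 × Fin 3) (Fin 3 × Fin 3) ℂ :=
  fun p q =>
    if p = (0, 0) ∧ q = (0, 0) then r
    else if p = (1, 1) ∧ q = (1, 1) then r
    else if p = (2, 2) ∧ q = (2, 2) then r
    else if p = (0, 1) ∧ q = (0, 1) then 1
    else if p = (1, 0) ∧ q = (1, 0) then 1
    else if p = (1, 2) ∧ q = (1, 2) then 1
    else if p = (2, 1) ∧ q = (2, 1) then 1
    else if p = (0, 2) ∧ q = (0, 2) then s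
    else if p = (2, 0) ∧ q = (2, 0) then s⁻¹
    else if p = (0, 1) ∧ q = (1, 0) then r - r⁻¹
    else if p = (0, 2) ∧ q = (2, 0) then r - r⁻¹
    else if p = (1, 2) ∧ q = (2, 1) then r - r⁻¹
    else 0

/-- The Jordanian `R`-matrix `R(G_{m,k})`, indexed by `Fin 3 × Fin 3`
(indices `0,1,2` correspond to the paper's `1,2,3`). -/
def Rgmk (m k : ℂ) : Matrix (Fin 3 × Fin 3) (Fin 3 × Fin 3) ℂ :=
  fun p q =>
    if p = q then 1
    else if p = (0, 0) ∧ q = (0, 1) then -m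
    else if p = (0, 0) ∧ q = (1, 0) then m
    else if p = (0, 0) ∧ q = (1, 1) then m ^ 2
    else if p = (0, 1) ∧ q = (1, 1) then -m
    else if p = (1, 0) ∧ q = (1, 1) then m
    else if p = (0, 2) ∧ q = (1, 2) then k
    else if p = (2, 0) ∧ q = (2, 1) then -k
    else 0

/-- The `3×3` transformation matrix `G`: the identity except for entry `(1,2) = η`
(`0`-based: `(0,1) = η`). -/
def Gmat (η : ℂ) : Matrix (Fin 3) (Fin 3) ℂ :=
  !![1, η, 0; 0, 1, 0; 0, 0, 1]

/-- Kronecker square of a `3×3` matrix, indexed by `Fin 3 × Fin 3`. -/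
def kron3 (G : Matrix (Fin 3) (Fin 3) ℂ) :
    Matrix (Fin 3 × Fin 3) (Fin 3 × Fin 3) ℂ :=
  fun p q => G p.1 q.1 * G p.2 q.2


/-- Intermediate form of the conjugated matrix, polynomial in `η, r, r⁻¹, s, s⁻¹`. -/
def Mexp (η r s : ℂ) : Matrix (Fin 3 × Fin 3) (Fin 3 × Fin 3) ℂ :=
  fun p q =>
    if p = (0, 0) ∧ q = (0, 0) then r
    else if p = (0, 0) ∧ q = (0, 1) then (r - 1) * η
    else if p = (0, 0) ∧ q = (1, 0) then (r⁻¹ - 1) * η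
    else if p = (0, 0) ∧ q = (1, 1) then (r + r⁻¹ - 2) * η ^ 2
    else if p = (0, 1) ∧ q = (0, 1) then 1
    else if p = (0, 1) ∧ q = (1, 0) then r - r⁻¹
    else if p = (0, 1) ∧ q = (1, 1) then (1 - r⁻¹) * η
    else if p = (0, 2) ∧ q = (0, 2) then s
    else if p = (0, 2) ∧ q = (1, 2) then (s - 1) * η
    else if p = (0, 2) ∧ q = (2, 0) then r - r⁻¹
    else if p = (1, 0) ∧ q = (1, 0) then 1
    else if p = (1, 0) ∧ q = (1, 1) then (1 - r) * η
    else if p = (1, 1) ∧ q = (1, 1) then r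
    else if p = (1, 2) ∧ q = (1, 2) then 1
    else if p = (1, 2) ∧ q = (2, 1) then r - r⁻¹
    else if p = (2, 0) ∧ q = (2, 0) then s⁻¹
    else if p = (2, 0) ∧ q = (2, 1) then (s⁻¹ - 1) * η
    else if p = (2, 1) ∧ q = (2, 1) then 1
    else if p = (2, 2) ∧ q = (2, 2) then r
    else 0

/-- Final rational form of the conjugated matrix after substituting
`η = m/(1-r)`, `s = 1 + (k/m)(1-r)`. -/
def Nmat (m k r : ℂ) : Matrix (Fin 3 × Fin 3) (Fin 3 × Fin 3) ℂ :=
  fun p q =>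
    if p = (0, 0) ∧ q = (0, 0) then r
    else if p = (0, 0) ∧ q = (0, 1) then -m
    else if p = (0, 0) ∧ q = (1, 0) then m / r
    else if p = (0, 0) ∧ q = (1, 1) then m ^ 2 / r
    else if p = (0, 1) ∧ q = (0, 1) then 1
    else if p = (0, 1) ∧ q = (1, 0) then (r ^ 2 - 1) / r
    else if p = (0, 1) ∧ q = (1, 1) then -m / r
    else if p = (0, 2) ∧ q = (0, 2) then (m + k * (1 - r)) / m
    else if p = (0, 2) ∧ q = (1, 2) then k
    else if p = (0, 2) ∧ q = (2, 0) then (r ^ 2 - 1) / r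
    else if p = (1, 0) ∧ q = (1, 0) then 1
    else if p = (1, 0) ∧ q = (1, 1) then m
    else if p = (1, 1) ∧ q = (1, 1) then r
    else if p = (1, 2) ∧ q = (1, 2) then 1
    else if p = (1, 2) ∧ q = (2, 1) then (r ^ 2 - 1) / r
    else if p = (2, 0) ∧ q = (2, 0) then m / (m + k * (1 - r))
    else if p = (2, 0) ∧ q = (2, 1) then -(m * k) / (m + k * (1 - r))
    else if p = (2, 1) ∧ q = (2, 1) then 1
    else if p = (2, 2) ∧ q = (2, 2) then r
    else 0

lemma kron3_mul (A B : Matrix (Fin 3) (Fin 3) ℂ) :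
    kron3 A * kron3 B = kron3 (A * B) := by
  ext p q
  simp [kron3, Matrix.mul_apply, Fintype.sum_prod_type, Fin.sum_univ_three]
  ring

lemma kron3_one : kron3 1 = 1 := by
  ext p q
  simp only [kron3, Matrix.one_apply, Prod.ext_iff]
  by_cases h1 : p.1 = q.1 <;> by_cases h2 : p.2 = q.2 <;> simp [h1, h2]

lemma Gmat_neg_mul (η : ℂ) : Gmat (-η) * Gmat η = 1 := by
  ext i j
  fin_cases i <;> fin_cases j <;>
    simp [Gmat, Matrix.mul_apply, Fin.sum_univ_three, Matrix.one_apply,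
      Matrix.vecHead, Matrix.vecTail]

lemma kron3_Gmat_inv (η : ℂ) : (kron3 (Gmat η))⁻¹ = kron3 (Gmat (-η)) :=
  Matrix.inv_eq_left_inv (by rw [kron3_mul, Gmat_neg_mul, kron3_one])

/-- Explicit form of `kron3 (Gmat η)`. -/
def Kmat (η : ℂ) : Matrix (Fin 3 × Fin 3) (Fin 3 × Fin 3) ℂ :=
  fun p q =>
    if p = q then 1
    else if p = (0, 0) ∧ q = (1, 1) then η ^ 2
    else if p.1 = 0 ∧ q.1 = 1 ∧ p.2 = q.2 then η
    else if p.2 = 0 ∧ q.2 = 1 ∧ p.1 = q.1 then η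
    else 0

/-- Explicit form of `Rgrs r s * Kmat η`. -/
def Pmat (η r s : ℂ) : Matrix (Fin 3 × Fin 3) (Fin 3 × Fin 3) ℂ :=
  fun p q =>
    if p = (0, 0) ∧ q = (0, 0) then r
    else if p = (0, 0) ∧ q = (0, 1) then r * η
    else if p = (0, 0) ∧ q = (1, 0) then r * η
    else if p = (0, 0) ∧ q = (1, 1) then r * η ^ 2
    else if p = (0, 1) ∧ q = (0, 1) then 1
    else if p = (0, 1) ∧ q = (1, 0) then r - r⁻¹
    else if p = (0, 1) ∧ q = (1, 1) then (1 + r - r⁻¹) * η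
    else if p = (0, 2) ∧ q = (0, 2) then s
    else if p = (0, 2) ∧ q = (1, 2) then η * s
    else if p = (0, 2) ∧ q = (2, 0) then r - r⁻¹
    else if p = (0, 2) ∧ q = (2, 1) then (r - r⁻¹) * η
    else if p = (1, 0) ∧ q = (1, 0) then 1
    else if p = (1, 0) ∧ q = (1, 1) then η
    else if p = (1, 1) ∧ q = (1, 1) then r
    else if p = (1, 2) ∧ q = (1, 2) then 1
    else if p = (1, 2) ∧ q = (2, 1) then r - r⁻¹
    else if p = (2, 0) ∧ q = (2, 0) then s⁻¹
    else if p = (2, 0) ∧ q = (2, 1) then η * s⁻¹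
    else if p = (2, 1) ∧ q = (2, 1) then 1
    else if p = (2, 2) ∧ q = (2, 2) then r
    else 0

set_option maxHeartbeats 1000000 in
lemma kron3_Gmat_eq (η : ℂ) : kron3 (Gmat η) = Kmat η := by
  ext p q
  fin_cases p <;> fin_cases q <;>
  · simp (config := { decide := true }) [kron3, Gmat, Kmat, Matrix.vecHead, Matrix.vecTail]
    try ring

set_option maxHeartbeats 1000000 in
lemma Rgrs_mul_Kmat (η r s : ℂ) : Rgrs r s * Kmat η = Pmat η r s := by
  ext p q
  fin_cases p <;> fin_cases q <;>
  · simp only [Matrix.mul_apply, Fintype.sum_prod_type, Fin.sum_univ_three]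
    simp (config := { decide := true }) [Rgrs, Kmat, Pmat]
    try ring

set_option maxHeartbeats 1000000 in
lemma Kmat_mul_Pmat (η r s : ℂ) : Kmat (-η) * Pmat η r s = Mexp η r s := by
  ext p q
  fin_cases p <;> fin_cases q <;>
  · simp only [Matrix.mul_apply, Fintype.sum_prod_type, Fin.sum_univ_three]
    simp (config := { decide := true }) [Kmat, Pmat, Mexp]
    try ring

lemma conj_eq_Mexp (η r s : ℂ) :
    kron3 (Gmat (-η)) * Rgrs r s * kron3 (Gmat η) = Mexp η r s := by
  rw [kron3_Gmat_eq, kron3_Gmat_eq, mul_assoc, Rgrs_mul_Kmat, Kmat_mul_Pmat]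

set_option maxHeartbeats 1000000 in
lemma Mexp_eq_Nmat (m k r : ℂ) (hm : m ≠ 0) (hr : r ≠ 0) (hr1 : r ≠ 1)
    (hs : 1 + (k / m) * (1 - r) ≠ 0) :
    Mexp (m / (1 - r)) r (1 + (k / m) * (1 - r)) = Nmat m k r := by
  have h1r : (1 : ℂ) - r ≠ 0 := sub_ne_zero.mpr (Ne.symm hr1)
  have hs' : m + k * (1 - r) ≠ 0 := by
    intro h
    apply hs
    field_simp
    linear_combination h
  ext p q
  fin_cases p <;> fin_cases q <;>
  · simp (config := { decide := true }) [Mexp, Nmat]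
    try field_simp
    try ring

lemma tendsto_helper (f : ℂ → ℂ) (c : ℂ) (hf : ContinuousAt f 1) (h : f 1 = c) :
    Tendsto f (𝓝 (1 : ℂ)) (𝓝 c) := h ▸ hf.tendsto

set_option maxHeartbeats 1000000 in
lemma Nmat_tendsto (m k : ℂ) (hm : m ≠ 0) (p q : Fin 3 × Fin 3) :
    Tendsto (fun r : ℂ => Nmat m k r p q) (𝓝 1) (𝓝 (Rgmk m k p q)) := by
  fin_cases p <;> fin_cases q <;>
  · simp (config := { decide := true }) only [Nmat, Rgmk, Prod.mk.injEq, and_true, true_and,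
      and_false, false_and, if_true, if_false, ite_true, ite_false, and_self, reduceIte]
    first
      | exact tendsto_const_nhds
      | exact tendsto_id
      | exact tendsto_helper _ _
          (by fun_prop (disch := norm_num [hm])) (by norm_num [hm] <;> field_simp <;> ring)


/-- in the contraction limit `r → 1` (with `s(r) = 1 + (k/m)(1-r)`, so
`(1-s)/(1-r) → k/m`), the transformed `R`-matrix of `G_{r,s(r)}` tends entrywise to the
Jordanian `R`-matrix `R(G_{m,k})`. -/
theorem Grs_contraction_to_Gmk (m k : ℂ) (hm : m ≠ 0) (p q : Fin 3 × Fin 3) :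
    Tendsto
      (fun r : ℂ =>
        ((kron3 (Gmat (m / (1 - r))))⁻¹ * Rgrs r (1 + (k / m) * (1 - r)) *
          kron3 (Gmat (m / (1 - r)))) p q)
      (𝓝[{r : ℂ | r ≠ 0 ∧ r ≠ 1 ∧ 1 + (k / m) * (1 - r) ≠ 0}] 1)
      (𝓝 (Rgmk m k p q)) := by
  have hlim : Tendsto (fun r : ℂ => Nmat m k r p q)
      (𝓝[{r : ℂ | r ≠ 0 ∧ r ≠ 1 ∧ 1 + (k / m) * (1 - r) ≠ 0}] 1) (𝓝 (Rgmk m k p q)) :=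
    (Nmat_tendsto m k hm p q).mono_left nhdsWithin_le_nhds
  refine hlim.congr' ?_
  filter_upwards [self_mem_nhdsWithin] with r hr
  obtain ⟨hr0, hr1, hs⟩ := hr
  rw [kron3_Gmat_inv, conj_eq_Mexp, Mexp_eq_Nmat m k r hm hr0 hr1 hs]
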